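/- arXiv:0903.1486 — 2 statements merged into one kernel-verified Lean document; each statement's English description precedes it below -/
import Mathlib

section
/- Suppose |A| is odd. For every automorphism α ∈ Aut(K,e), the Weil operator W(σ(α)) associated to the lift σ(α) : 𝒲_k ↦ 𝒲_{α(k)} satisfies |tr W(σ(α))|² = |K^α|, the number of fixed points of α in K. -/
/-!
The normalized Weyl operators `𝒲_k`, `k ∈ K`, form a basis of `End(L²(A))`: they are linearly
independent because the characters of `A` are, and there are `|A|²` of them. Conjugation
`X ↦ W X W*` permutes this basis according to `α`, so its trace is `|K^α|`. On the other hand,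
under `End(L²(A)) ≅ L²(A)* ⊗ L²(A)` left multiplication by `W` and right multiplication by `W*`
become `id ⊗ W` and `(W*)ᵀ ⊗ id`, so the same trace is `tr W · tr W* = |tr W|²`.
-/

noncomputable section

variable (A : Type*) [AddCommGroup A] [Fintype A]

/-- `L²(A)`, the Hilbert space of complex-valued functions on `A`. -/
abbrev L2 := EuclideanSpace ℂ A

/-- The parameter group `K = A × Â`. -/
abbrev Kgrp := A × Additive (AddChar A Circle)

variable {A}

/-- Weyl operator `W_{(x,χ)} = T_x M_χ` on `L²(A)`. -/
def Weyl (k : Kgrp A) : Module.End ℂ (L2 A) where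
  toFun f := WithLp.toLp 2 (fun u => (Additive.toMul k.2 (u - k.1) : ℂ) * f (u - k.1))
  map_add' f g := by ext u; simp [mul_add]
  map_smul' c f := by ext u; simp [smul_eq_mul]; ring

/-- Normalized Weyl operator `𝒲_{(x,χ)} = χ(x/2) W_{(x,χ)}`, where
`half = (x ↦ x/2)` is the inverse of doubling on `A`. -/
def NWeyl (half : A → A) (k : Kgrp A) : Module.End ℂ (L2 A) :=
  (Additive.toMul k.2 (half k.1) : ℂ) • Weyl k

/-- The normalized cocycle `c̃(k,l) = χ(y/2) λ(x/2)⁻¹` for `k = (x,χ)`,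
`l = (y,λ)`. -/
def ctilde (half : A → A) (k l : Kgrp A) : Circle :=
  Additive.toMul k.2 (half l.1) * (Additive.toMul l.2 (half k.1))⁻¹

/-- The commutator pairing `e(k,l) = χ(y) λ(x)⁻¹` on `K = A × Â`. -/
def commPairing {A : Type*} [AddCommGroup A] (k l : Kgrp A) : Circle :=
  Additive.toMul k.2 l.1 * (Additive.toMul l.2 k.1)⁻¹

namespace LinearMap

open TensorProduct

theorem trace_mulLeft_comp_mulRight {R M : Type*} [CommRing R] [AddCommGroup M] [Module R M]
    [Module.Free R M] [Module.Finite R M] (f g : Module.End R M) :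
    trace R (Module.End R M) (mulLeft R f ∘ₗ mulRight R g) = trace R M f * trace R M g := by
  let e := dualTensorHomEquiv R M M
  have hconj : mulLeft R f ∘ₗ mulRight R g = e.conj (map (Module.Dual.transpose g) f) := by
    rw [LinearEquiv.conj_apply, LinearEquiv.eq_comp_toLinearMap_symm]
    ext φ m x
    simp [e, dualTensorHom_apply, Module.Dual.transpose_apply]
  rw [hconj]
  refine (trace_conj' (M := Module.Dual R M ⊗[R] M) (N := Module.End R M) _ e).trans ?_
  rw [trace_tensorProduct', trace_transpose', mul_comm]

theorem trace_adjoint {𝕜 E : Type*} [RCLike 𝕜] [NormedAddCommGroup E] [InnerProductSpace 𝕜 E]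
    [FiniteDimensional 𝕜 E] (f : E →ₗ[𝕜] E) :
    trace 𝕜 E (adjoint f) = starRingEnd 𝕜 (trace 𝕜 E f) := by
  let b := stdOrthonormalBasis 𝕜 E
  rw [trace_eq_matrix_trace 𝕜 b.toBasis, toMatrix_adjoint, Matrix.trace_conjTranspose,
    trace_eq_matrix_trace 𝕜 b.toBasis]
  rfl

theorem trace_mulLeft_comp_mulRight_star {𝕜 E : Type*} [RCLike 𝕜] [NormedAddCommGroup E]
    [InnerProductSpace 𝕜 E] [FiniteDimensional 𝕜 E] (f : E →ₗ[𝕜] E) :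
    trace 𝕜 (Module.End 𝕜 E) (mulLeft 𝕜 f ∘ₗ mulRight 𝕜 (star f)) = (‖trace 𝕜 E f‖ ^ 2 : ℝ) := by
  rw [trace_mulLeft_comp_mulRight, star_eq_adjoint, trace_adjoint, RCLike.mul_conj]
  norm_cast

theorem trace_eq_card_fixedPoints {ι R M : Type*} [Finite ι] [CommRing R] [AddCommGroup M]
    [Module R M] (b : Module.Basis ι R M) (σ : ι → ι) (f : Module.End R M)
    (hf : ∀ i, f (b i) = b (σ i)) : trace R M f = Nat.card {i // σ i = i} := by
  classical
  cases nonempty_fintype ι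
  rw [trace_eq_matrix_trace R b, Matrix.trace, Nat.card_eq_fintype_card, Fintype.card_subtype,
    ← Finset.sum_boole]
  refine Finset.sum_congr rfl fun i _ => ?_
  rw [Matrix.diag, toMatrix_apply, hf, b.repr_self, Finsupp.single_apply]

end LinearMap

omit [Fintype A] in
lemma weyl_single [DecidableEq A] (k : Kgrp A) (v : A) (c : ℂ) :
    Weyl k (EuclideanSpace.single v c) =
      EuclideanSpace.single (v + k.1) ((Additive.toMul k.2 v : ℂ) * c) := by
  ext u
  simp only [Weyl, LinearMap.coe_mk, AddHom.coe_mk, PiLp.single_apply]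
  split_ifs with h₁ h₂ h₂ <;> simp_all [sub_eq_iff_eq_add]

instance : Fintype (AddChar A Circle) :=
  Fintype.ofEquiv _ (AddChar.circleEquivComplex (α := A)).toEquiv.symm

lemma card_addChar_circle : Fintype.card (AddChar A Circle) = Fintype.card A :=
  (Fintype.card_congr AddChar.circleEquivComplex.toEquiv).trans AddChar.card_eq

lemma linearIndependent_addChar_circle :
    LinearIndependent ℂ (fun (χ : AddChar A Circle) (v : A) => (χ v : ℂ)) :=
  (AddChar.linearIndependent A ℂ).comp (fun χ => AddChar.circleEquivComplex χ)
    AddChar.circleEquivComplex.injective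

lemma linearIndependent_weyl : LinearIndependent ℂ (Weyl : Kgrp A → Module.End ℂ (L2 A)) := by
  classical
  rw [Fintype.linearIndependent_iff]
  intro g hg ⟨x, χ⟩
  -- The `δ_{v+x}`-coefficient of the relation applied to `δ_v` only sees the terms `(x, ψ)`.
  have hsum : ∀ v : A, ∑ ψ, g (x, ψ) * (Additive.toMul ψ v : ℂ) = 0 := by
    intro v
    have := congr($hg (EuclideanSpace.single v 1) (v + x))
    simpa [LinearMap.sum_apply, weyl_single, Pi.single_apply, Fintype.sum_prod_type] using this
  exact Fintype.linearIndependent_iff.mp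
    (linearIndependent_addChar_circle.comp Additive.toMul Additive.toMul.injective)
    (fun ψ => g (x, ψ)) (funext fun v => by simpa using hsum v) χ

lemma linearIndependent_nWeyl (half : A → A) :
    LinearIndependent ℂ (NWeyl half : Kgrp A → Module.End ℂ (L2 A)) :=
  linearIndependent_weyl.units_smul fun k =>
    Units.mk0 _ (Circle.coe_ne_zero (Additive.toMul k.2 (half k.1)))

lemma card_kgrp_eq_finrank :
    Fintype.card (Kgrp A) = Module.finrank ℂ (Module.End ℂ (L2 A)) := by
  simp [Module.finrank_linearMap, Fintype.card_prod, card_addChar_circle]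

def nWeylBasis (half : A → A) : Module.Basis (Kgrp A) ℂ (Module.End ℂ (L2 A)) :=
  basisOfLinearIndependentOfCardEqFinrank (linearIndependent_nWeyl half) card_kgrp_eq_finrank

@[simp]
lemma coe_nWeylBasis (half : A → A) : ⇑(nWeylBasis half) = NWeyl half :=
  coe_basisOfLinearIndependentOfCardEqFinrank _ _

theorem abs_trace_weil_eq_card_fixed_general (A : Type*) [AddCommGroup A] [Fintype A]
    (half : A → A)
    (α : AddAut (Kgrp A))
    (W : Module.End ℂ (L2 A)) (hWu : W ∈ unitary (Module.End ℂ (L2 A)))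
    (hint : ∀ k : Kgrp A, W * NWeyl half k = NWeyl half (α k) * W) :
    (‖LinearMap.trace ℂ (L2 A) W‖) ^ 2 =
      (Nat.card {k : Kgrp A // α k = k} : ℝ) := by
  have hconj : ∀ k, (LinearMap.mulLeft ℂ W ∘ₗ LinearMap.mulRight ℂ (star W)) (nWeylBasis half k) =
      nWeylBasis half (α k) := by
    intro k
    simp only [coe_nWeylBasis, LinearMap.comp_apply, LinearMap.mulRight_apply,
      LinearMap.mulLeft_apply]
    rw [← mul_assoc, hint k, mul_assoc, Unitary.mul_star_self_of_mem hWu, mul_one]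
  have htrace := LinearMap.trace_eq_card_fixedPoints (nWeylBasis half) α _ hconj
  rwa [LinearMap.trace_mulLeft_comp_mulRight_star, ← RCLike.ofReal_natCast,
    RCLike.ofReal_inj] at htrace

/-- if `|A|` is odd and `α ∈ Aut(K,e)`, any unitary operator
`W(σ(α))` with `W(σ(α)) 𝒲_k W(σ(α))⁻¹ = 𝒲_{α(k)}` satisfies
`|tr W(σ(α))|² = |K^α|`. -/
theorem abs_trace_weil_eq_card_fixed (A : Type*) [AddCommGroup A] [Fintype A]
    (hodd : Odd (Fintype.card A)) (half : A → A)
    (hhalf : ∀ x : A, half x + half x = x)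
    (α : AddAut (Kgrp A))
    (hα : ∀ k l : Kgrp A, commPairing (α k) (α l) = commPairing k l)
    (W : Module.End ℂ (L2 A)) (hWu : W ∈ unitary (Module.End ℂ (L2 A)))
    (hint : ∀ k : Kgrp A, W * NWeyl half k = NWeyl half (α k) * W) :
    (‖LinearMap.trace ℂ (L2 A) W‖) ^ 2 =
      (Nat.card {k : Kgrp A // α k = k} : ℝ) :=
  abs_trace_weil_eq_card_fixed_general A half α W hWu hint
end
end

section
/- Suppose |A| is odd and let δ_K = Σ_{k∈K} 𝒲_k acting on L²(A). Then (δ_K f)(u) = √|K| · f(−u) for all f ∈ L²(A) and u ∈ A. Consequently ε_± = (Id ± δ_K/√|K|)/2 are orthogonal projections onto the subspaces of even and odd functions respectively, and are orthogonal idempotents summing to the identity. -/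
/-!
Setup: normalized Weyl operators for a finite abelian group of odd order.
`half` denotes the inverse of multiplication by 2 on `A`.
-/

noncomputable section

variable (A : Type*) [AddCommGroup A] [Fintype A]

variable {A}

variable (A) in
/-- The subspace of even functions in `L²(A)`. -/
def evenSubmodule : Submodule ℂ (L2 A) where
  carrier := {f | ∀ u : A, f (-u) = f u}
  add_mem' hf hg u := by simp [hf u, hg u]
  zero_mem' u := rfl
  smul_mem' c f hf u := by simp [hf u]

variable (A) in
/-- The subspace of odd functions in `L²(A)`. -/
def oddSubmodule : Submodule ℂ (L2 A) where
  carrier := {f | ∀ u : A, f (-u) = -f u}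
  add_mem' hf hg u := by simp [hf u, hg u]; ring
  zero_mem' u := by simp
  smul_mem' c f hf u := by simp [hf u]


/-!
Summing over the characters first, `∑_χ χ(x/2) χ(u - x) = ∑_χ χ(x/2 + u - x)` vanishes unless
`x/2 = u`, i.e. `x = 2u`, where it equals `|A|`. Hence `δ_K = |A| • R` with `R f = f ∘ neg`, and
`√|K| = |A|`, so `ε_± = (1 ± R)/2` for the self-adjoint involution `R`: these are the spectral
projections of `R` onto its `±1`-eigenspaces, the even and the odd functions.
-/

section Involution

variable {𝕜 R : Type*} [Field 𝕜] [NeZero (2 : 𝕜)] [Ring R] [Algebra 𝕜 R] {r : R}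

theorem isIdempotentElem_inv_two_smul_one_add (hr : r * r = 1) :
    IsIdempotentElem ((2⁻¹ : 𝕜) • (1 + r)) := by
  have hsq : (1 + r) * (1 + r) = (2 : 𝕜) • (1 + r) := by
    simp only [mul_add, add_mul, one_mul, mul_one, hr]
    module
  rw [IsIdempotentElem, smul_mul_smul_comm, hsq, smul_smul, mul_assoc,
    inv_mul_cancel₀ two_ne_zero, mul_one]

theorem inv_two_smul_one_sub_eq_one_sub :
    (2⁻¹ : 𝕜) • (1 - r) = 1 - (2⁻¹ : 𝕜) • (1 + r) := by
  match_scalars <;> field_simp; norm_num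

theorem isIdempotentElem_inv_two_smul_one_sub (hr : r * r = 1) :
    IsIdempotentElem ((2⁻¹ : 𝕜) • (1 - r)) :=
  inv_two_smul_one_sub_eq_one_sub (𝕜 := 𝕜) (r := r) ▸
    (isIdempotentElem_inv_two_smul_one_add hr).one_sub

end Involution

section StarInvolution

variable {𝕜 R : Type*} [Field 𝕜] [StarRing 𝕜] [Ring R] [StarRing R] [Algebra 𝕜 R]
  [StarModule 𝕜 R] {r : R}

theorem IsSelfAdjoint.inv_two_smul_one_add (hr : IsSelfAdjoint r) :
    IsSelfAdjoint ((2⁻¹ : 𝕜) • (1 + r)) :=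
  (IsSelfAdjoint.ofNat 2).inv₀.smul ((IsSelfAdjoint.one R).add hr)

theorem IsSelfAdjoint.inv_two_smul_one_sub (hr : IsSelfAdjoint r) :
    IsSelfAdjoint ((2⁻¹ : 𝕜) • (1 - r)) :=
  (IsSelfAdjoint.ofNat 2).inv₀.smul ((IsSelfAdjoint.one R).sub hr)

end StarInvolution

section Eigenspaces

variable {𝕜 M : Type*} [Field 𝕜] [NeZero (2 : 𝕜)] [AddCommGroup M] [Module 𝕜 M]
  {r : Module.End 𝕜 M}

theorem mem_range_inv_two_smul_one_add_iff (hr : r * r = 1) {x : M} :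
    x ∈ LinearMap.range ((2⁻¹ : 𝕜) • (1 + r)) ↔ r x = x := by
  rw [LinearMap.IsIdempotentElem.mem_range_iff (isIdempotentElem_inv_two_smul_one_add hr),
    LinearMap.smul_apply, inv_smul_eq_iff₀ two_ne_zero, two_smul]
  simp

theorem mem_range_inv_two_smul_one_sub_iff (hr : r * r = 1) {x : M} :
    x ∈ LinearMap.range ((2⁻¹ : 𝕜) • (1 - r)) ↔ r x = -x := by
  rw [LinearMap.IsIdempotentElem.mem_range_iff (isIdempotentElem_inv_two_smul_one_sub hr),
    LinearMap.smul_apply, inv_smul_eq_iff₀ two_ne_zero, two_smul]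
  simp [sub_eq_add_neg, neg_eq_iff_eq_neg]

end Eigenspaces

namespace L2

variable {A : Type*} [AddCommGroup A]

def reflection : Module.End ℂ (L2 A) where
  toFun f := WithLp.toLp 2 (fun u => f (-u))
  map_add' _ _ := rfl
  map_smul' _ _ := rfl

@[simp]
theorem reflection_apply (f : L2 A) (u : A) : reflection f u = f (-u) := rfl

theorem reflection_mul_self : reflection * reflection = (1 : Module.End ℂ (L2 A)) := by
  ext f u
  simp

theorem isSelfAdjoint_reflection [Fintype A] :
    IsSelfAdjoint (reflection : Module.End ℂ (L2 A)) := by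
  rw [← LinearMap.isSymmetric_iff_isSelfAdjoint]
  intro f g
  simp only [PiLp.inner_apply, reflection_apply]
  exact Fintype.sum_equiv (Equiv.neg A) _ _ fun u => by simp

theorem mem_evenSubmodule_iff_reflection_eq {f : L2 A} :
    f ∈ evenSubmodule A ↔ reflection f = f := by
  rw [PiLp.ext_iff]
  rfl

theorem mem_oddSubmodule_iff_reflection_eq {f : L2 A} :
    f ∈ oddSubmodule A ↔ reflection f = -f := by
  rw [PiLp.ext_iff]
  rfl

end L2

section Halving

variable {A : Type*} [AddCommGroup A] {half : A → A}

theorem half_add_self [Finite A] (hhalf : ∀ x, half x + half x = x) (u : A) :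
    half (u + u) = u := by
  have hdouble : Function.Injective fun x : A => x + x :=
    Finite.injective_iff_surjective.mpr fun x => ⟨half x, hhalf x⟩
  exact hdouble (hhalf (u + u))

theorem half_add_sub_eq_zero_iff [Finite A] (hhalf : ∀ x, half x + half x = x) {x u : A} :
    half x + (u - x) = 0 ↔ x = u + u := by
  constructor
  · intro h
    have hx : half x = x - u := by rw [← sub_eq_zero, ← h]; abel
    have hxx := hhalf x
    rw [hx] at hxx
    rw [← sub_eq_zero, ← sub_eq_zero.mpr hxx]
    abel
  · rintro rfl
    rw [half_add_self hhalf]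
    abel

end Halving

section Characters

variable {A : Type*} [AddCommGroup A] [Fintype A] [Fintype (Additive (AddChar A Circle))]

theorem card_additive_addChar_circle :
    Fintype.card (Additive (AddChar A Circle)) = Fintype.card A := by
  rw [← AddChar.card_eq (α := A), Fintype.card_congr
    (Additive.toMul.trans AddChar.circleEquivComplex.toEquiv)]

theorem sum_additive_addChar_circle_apply [DecidableEq A] (a : A) :
    ∑ χ : Additive (AddChar A Circle), (Additive.toMul χ a : ℂ) =
      if a = 0 then (Fintype.card A : ℂ) else 0 := by
  rw [← AddChar.sum_apply_eq_ite a]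
  exact Fintype.sum_equiv (Additive.toMul.trans AddChar.circleEquivComplex.toEquiv) _ _
    fun _ => rfl

theorem sqrt_card_Kgrp : √(Fintype.card (Kgrp A) : ℝ) = Fintype.card A := by
  rw [Fintype.card_prod, card_additive_addChar_circle, Nat.cast_mul,
    Real.sqrt_mul_self (Nat.cast_nonneg _)]

end Characters

section Weyl

variable {A : Type*} [AddCommGroup A]

theorem NWeyl_apply (half : A → A) (k : Kgrp A) (f : L2 A) (u : A) :
    NWeyl half k f u = (Additive.toMul k.2 (half k.1) : ℂ) *
      ((Additive.toMul k.2 (u - k.1) : ℂ) * f (u - k.1)) := rfl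

variable [Fintype A] [Fintype (Additive (AddChar A Circle))] {half : A → A}

theorem sum_NWeyl_apply (hhalf : ∀ x, half x + half x = x) (f : L2 A) (u : A) :
    (∑ k : Kgrp A, NWeyl half k) f u = Fintype.card A * f (-u) := by
  classical
  calc (∑ k : Kgrp A, NWeyl half k) f u
      = ∑ x : A, ∑ χ : Additive (AddChar A Circle), (Additive.toMul χ (half x) : ℂ) *
          ((Additive.toMul χ (u - x) : ℂ) * f (u - x)) := by
        simp only [LinearMap.sum_apply, WithLp.ofLp_sum, Finset.sum_apply, Fintype.sum_prod_type,
          NWeyl_apply]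
    _ = ∑ x : A, (∑ χ : Additive (AddChar A Circle),
          (Additive.toMul χ (half x + (u - x)) : ℂ)) * f (u - x) := by
        simp only [Finset.sum_mul, AddChar.map_add_eq_mul, Circle.coe_mul, mul_assoc]
    _ = ∑ x : A, if x = u + u then (Fintype.card A : ℂ) * f (u - x) else 0 := by
        simp only [sum_additive_addChar_circle_apply, half_add_sub_eq_zero_iff hhalf, ite_mul,
          zero_mul]
    _ = Fintype.card A * f (-u) := by
        rw [Finset.sum_ite_eq', if_pos (Finset.mem_univ _), sub_add_cancel_left]

theorem sum_NWeyl_eq (hhalf : ∀ x, half x + half x = x) :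
    ∑ k : Kgrp A, NWeyl half k = (Fintype.card A : ℂ) • L2.reflection := by
  ext f u
  exact sum_NWeyl_apply hhalf f u

end Weyl

theorem deltaK_and_projections_general (A : Type*) [AddCommGroup A] [Fintype A]
    [Fintype (Additive (AddChar A Circle))]
    (half : A → A)
    (hhalf : ∀ x : A, half x + half x = x) :
    (∀ (f : L2 A) (u : A),
      (∑ k : Kgrp A, NWeyl half k) f u =
        (Real.sqrt (Fintype.card (Kgrp A)) : ℂ) * f (-u)) ∧
    (let δK : Module.End ℂ (L2 A) := ∑ k : Kgrp A, NWeyl half k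
     let εp : Module.End ℂ (L2 A) :=
       (2⁻¹ : ℂ) • (1 + ((Real.sqrt (Fintype.card (Kgrp A)) : ℂ))⁻¹ • δK)
     let εm : Module.End ℂ (L2 A) :=
       (2⁻¹ : ℂ) • (1 - ((Real.sqrt (Fintype.card (Kgrp A)) : ℂ))⁻¹ • δK)
     εp * εp = εp ∧ εm * εm = εm ∧ εp * εm = 0 ∧ εm * εp = 0 ∧
       εp + εm = 1 ∧ IsSelfAdjoint εp ∧ IsSelfAdjoint εm ∧
       LinearMap.range εp = evenSubmodule A ∧
       LinearMap.range εm = oddSubmodule A) := by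
  have hsqrt : (Real.sqrt (Fintype.card (Kgrp A)) : ℂ) = Fintype.card A := by
    exact_mod_cast sqrt_card_Kgrp
  have hδ : ((Real.sqrt (Fintype.card (Kgrp A)) : ℂ))⁻¹ • ∑ k : Kgrp A, NWeyl half k =
      L2.reflection := by
    rw [sum_NWeyl_eq hhalf, hsqrt, smul_smul,
      inv_mul_cancel₀ (Nat.cast_ne_zero.mpr Fintype.card_ne_zero), one_smul]
  refine ⟨fun f u => by rw [sum_NWeyl_apply hhalf, hsqrt], ?_⟩
  simp only [hδ]
  have hr := L2.reflection_mul_self (A := A)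
  have hp := isIdempotentElem_inv_two_smul_one_add (𝕜 := ℂ) hr
  have hm := inv_two_smul_one_sub_eq_one_sub (𝕜 := ℂ) (r := L2.reflection (A := A))
  refine ⟨hp, isIdempotentElem_inv_two_smul_one_sub hr, ?_, ?_, ?_,
    L2.isSelfAdjoint_reflection.inv_two_smul_one_add (R := Module.End ℂ (L2 A)),
    L2.isSelfAdjoint_reflection.inv_two_smul_one_sub (R := Module.End ℂ (L2 A)), ?_, ?_⟩
  · rw [hm]; exact hp.mul_one_sub_self
  · rw [hm]; exact hp.one_sub_mul_self
  · rw [hm, add_sub_cancel]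
  · ext f
    rw [mem_range_inv_two_smul_one_add_iff hr, L2.mem_evenSubmodule_iff_reflection_eq]
  · ext f
    rw [mem_range_inv_two_smul_one_sub_iff hr, L2.mem_oddSubmodule_iff_reflection_eq]

/-- for `|A|` odd, `δ_K = Σ_k 𝒲_k` satisfies
`(δ_K f)(u) = √|K| f(-u)`, and `ε_± = (1 ± δ_K/√|K|)/2` are orthogonal
(self-adjoint) idempotents summing to the identity, projecting onto the even
and odd functions respectively. -/
theorem deltaK_and_projections (A : Type*) [AddCommGroup A] [Fintype A]
    [Fintype (Additive (AddChar A Circle))]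
    (hodd : Odd (Fintype.card A)) (half : A → A)
    (hhalf : ∀ x : A, half x + half x = x) :
    (∀ (f : L2 A) (u : A),
      (∑ k : Kgrp A, NWeyl half k) f u =
        (Real.sqrt (Fintype.card (Kgrp A)) : ℂ) * f (-u)) ∧
    (let δK : Module.End ℂ (L2 A) := ∑ k : Kgrp A, NWeyl half k
     let εp : Module.End ℂ (L2 A) :=
       (2⁻¹ : ℂ) • (1 + ((Real.sqrt (Fintype.card (Kgrp A)) : ℂ))⁻¹ • δK)
     let εm : Module.End ℂ (L2 A) :=
       (2⁻¹ : ℂ) • (1 - ((Real.sqrt (Fintype.card (Kgrp A)) : ℂ))⁻¹ • δK)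
     εp * εp = εp ∧ εm * εm = εm ∧ εp * εm = 0 ∧ εm * εp = 0 ∧
       εp + εm = 1 ∧ IsSelfAdjoint εp ∧ IsSelfAdjoint εm ∧
       LinearMap.range εp = evenSubmodule A ∧
       LinearMap.range εm = oddSubmodule A) :=
  deltaK_and_projections_general A half hhalf
end
end
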